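/- In the Oscillating CSL temporal graphs G_1 (pattern C_{7,2} → C_{7,3} → ...) and G_2 (pattern C_{7,3} → C_{7,2} → ...) at a sufficiently large odd timestamp t_n, the heterogeneous revision value r^k_2(t_n, {1,7}) computed in G_1 differs from r^k_u(t_n, {1,7}) for every node u in G_2, provided the revision aggregator TR is injective; consequently a 3-layer RTRGN with heterogeneous revision distinguishes G_1 from G_2 while all Temporal-1WL-bounded models do not. -/

import Mathlib

/-- A temporal graph on node type `V`: a finite set of timed edge events. -/
structure TemporalGraph (V : Type) where
  events : Finset (V × V × ℕ)

/-- The multiset of (neighbor, event time) pairs of `u` over events up to time `t`. -/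
def nbrs {V : Type} [DecidableEq V] (G : TemporalGraph V) (t : ℕ) (u : V) :
    Multiset (V × ℕ) :=
  (G.events.filter (fun e => e.1 = u ∧ e.2.2 ≤ t)).val.map (fun e => (e.2.1, e.2.2))

/-- Canonical color type for the Temporal 1-WL test (an injective hash is modeled by
the canonical nested-multiset color). -/
def ColorT : ℕ → Type
  | 0 => Unit
  | k + 1 => ColorT k × Multiset (ColorT k × ℕ)

/-- Temporal 1-WL color refinement at time `t`: the color of `u` at iteration `k+1` is
the (injective) pairing of its previous color with the multiset of
(neighbor color, event time) pairs over all edge events up to time `t`. -/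
def wlColor {V : Type} [DecidableEq V] (G : TemporalGraph V) (t : ℕ) :
    (k : ℕ) → V → ColorT k
  | 0, _ => ()
  | k + 1, u =>
      (wlColor G t k u, (nbrs G t u).map (fun p => (wlColor G t k p.1, p.2)))
/-- Neighbors of `u` in the circular skip link graph C_{N,s}: cycle neighbors `u ± 1`
and skip neighbors `u ± s`. -/
def cslNbrs {N : ℕ} (s : ℕ) (u : ZMod N) : Finset (ZMod N) :=
  {u + 1, u - 1, u + (s : ZMod N), u - (s : ZMod N)}

/-- All edge events of one snapshot of C_{N,s} added simultaneously at timestamp `m`. -/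
def cslEvents (N : ℕ) [NeZero N] (s m : ℕ) : Finset (ZMod N × ZMod N × ℕ) :=
  Finset.univ.biUnion (fun u : ZMod N => (cslNbrs s u).image (fun v => (u, v, m)))

/-- The Oscillating CSL temporal graph with timestamps `1, …, n`: at odd timestamps all
edges of C_{N,s₁} are added, at even timestamps all edges of C_{N,s₂}. -/
def oscGraph (N : ℕ) [NeZero N] (s₁ s₂ n : ℕ) : TemporalGraph (ZMod N) :=
  ⟨(Finset.range n).biUnion
    (fun m => cslEvents N (if (m + 1) % 2 = 1 then s₁ else s₂) (m + 1))⟩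


/-- Events strictly before time `t` (the set `E(t^-)` used by the revision module). -/
def nbrsBefore {V : Type} [DecidableEq V] (G : TemporalGraph V) (t : ℕ) (u : V) :
    Multiset (V × ℕ) :=
  (G.events.filter (fun e => e.1 = u ∧ e.2.2 < t)).val.map (fun e => (e.2.1, e.2.2))

/-- Canonical value type of the heterogeneous revision computed by an injective
aggregator TR: a nested multiset of (lower revision, event time, specialty indicator). -/
def RCol : ℕ → Type
  | 0 => Unit
  | k + 1 => Multiset (RCol k × ℕ × Bool)

/-- Heterogeneous revision with injective TR: `hrev G t k u S` is the canonical value of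
`r^k_u(t, S)`, recursively collecting from each previous neighbor its lower-level
revision (with specialty set `S ∪ {u}`), the event time `Φ(e) = t'`, and the indicator
`1[v ∈ S]`. -/
def hrev {V : Type} [DecidableEq V] (G : TemporalGraph V) (t : ℕ) :
    (k : ℕ) → V → Finset V → RCol k
  | 0, _, _ => ()
  | k + 1, u, S =>
      (nbrsBefore G t u).map
        (fun p => (hrev G t k p.1 (insert u S), p.2, decide (p.1 ∈ S)))

/-
Both oscillating graphs are built from 4-regular snapshots, so every node of either graph has
exactly four events at each timestamp `1, …, n`; Temporal 1-WL sees only neighbour colours and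
times, hence by induction all colours agree. The revision additionally pairs each past event time
with the bit `1[v ∈ S]`, and already this pairing, read off at times 1 and 2, separates node 2 of
`G₁` from every node of `G₂`.
-/

open Finset

namespace TemporalGraph

variable {V : Type} [DecidableEq V]

def eventsAt (G : TemporalGraph V) (u : V) (m : ℕ) : Finset (V × V × ℕ) :=
  G.events.filter fun e => e.1 = u ∧ e.2.2 = m

theorem count_map_snd_nbrs (G : TemporalGraph V) (t : ℕ) (u : V) (m : ℕ) :
    ((nbrs G t u).map Prod.snd).count m = if m ≤ t then #(G.eventsAt u m) else 0 := by
  rw [nbrs, Multiset.map_map, Multiset.count_map, ← filter_val, ← card_def,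
    filter_filter, eventsAt]
  split_ifs with hm
  · congr 1
    exact filter_congr fun e _ => by grind
  · rw [card_eq_zero, filter_eq_empty_iff]
    intro e _
    simp only [Function.comp_apply]
    omega

def timedIndicators (G : TemporalGraph V) (t : ℕ) (u : V) (S : Finset V) :
    Multiset (ℕ × Bool) :=
  (nbrsBefore G t u).map fun p => (p.2, decide (p.1 ∈ S))

theorem count_timedIndicators_true (G : TemporalGraph V) {t m : ℕ} (hm : m < t) (u : V)
    (S : Finset V) :
    (G.timedIndicators t u S).count (m, true) = #((G.eventsAt u m).filter (·.2.1 ∈ S)) := by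
  rw [timedIndicators, nbrsBefore, Multiset.map_map, Multiset.count_map, ← filter_val,
    ← card_def, filter_filter, eventsAt, filter_filter]
  congr 1
  exact filter_congr fun e _ => by simp only [Function.comp_apply, Prod.mk.injEq]; grind

theorem map_snd_hrev_succ (G : TemporalGraph V) (t k : ℕ) (u : V) (S : Finset V) :
    (hrev G t (k + 1) u S).map Prod.snd = G.timedIndicators t u S := by
  simp only [hrev, Multiset.map_map, Function.comp_def, timedIndicators]

theorem wlColor_eq_of_map_snd_nbrs_eq {W : Type} [DecidableEq W] (G : TemporalGraph V)
    (G' : TemporalGraph W) (t : ℕ)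
    (h : ∀ u u', (nbrs G t u).map Prod.snd = (nbrs G' t u').map Prod.snd) :
    ∀ k u u', wlColor G t k u = wlColor G' t k u' := by
  intro k
  induction k with
  | zero => intro _ _; rfl
  | succ k ih =>
    intro u u'
    have hG : ∀ v, wlColor G t k v = wlColor G' t k u' := fun v => ih v u'
    have hG' : ∀ v', wlColor G' t k v' = wlColor G' t k u' := fun v' =>
      (ih u v').symm.trans (ih u u')
    refine Prod.ext (ih u u') ?_
    calc (nbrs G t u).map (fun p => (wlColor G t k p.1, p.2))
        = ((nbrs G t u).map Prod.snd).map (wlColor G' t k u', ·) := by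
          rw [Multiset.map_map]; exact Multiset.map_congr rfl fun p _ => by simp [hG]
      _ = ((nbrs G' t u').map Prod.snd).map (wlColor G' t k u', ·) := by rw [h]
      _ = (nbrs G' t u').map (fun p => (wlColor G' t k p.1, p.2)) := by
          rw [Multiset.map_map]; exact Multiset.map_congr rfl fun p _ => by simp [hG']

end TemporalGraph

section OscillatingCSL

variable {N : ℕ} [NeZero N] (s₁ s₂ n : ℕ)

theorem mem_oscGraph_events (e : ZMod N × ZMod N × ℕ) :
    e ∈ (oscGraph N s₁ s₂ n).events ↔
      (1 ≤ e.2.2 ∧ e.2.2 ≤ n) ∧ e.2.1 ∈ cslNbrs (if e.2.2 % 2 = 1 then s₁ else s₂) e.1 := by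
  obtain ⟨u, v, m⟩ := e
  simp only [oscGraph, cslEvents, mem_biUnion, mem_range, mem_univ, true_and, mem_image,
    Prod.mk.injEq]
  constructor
  · rintro ⟨m', hm', w, v', hv', rfl, rfl, rfl⟩
    exact ⟨⟨by omega, by omega⟩, hv'⟩
  · rintro ⟨⟨h1, h2⟩, hv⟩
    obtain ⟨m', rfl⟩ : ∃ m', m = m' + 1 := ⟨m - 1, by omega⟩
    exact ⟨m', by omega, u, v, hv, rfl, rfl, rfl⟩

theorem eventsAt_oscGraph (u : ZMod N) (m : ℕ) :
    (oscGraph N s₁ s₂ n).eventsAt u m =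
      if 1 ≤ m ∧ m ≤ n then
        (cslNbrs (if m % 2 = 1 then s₁ else s₂) u).image fun v => (u, v, m)
      else ∅ := by
  ext ⟨w, v, m'⟩
  simp only [TemporalGraph.eventsAt, mem_filter, mem_oscGraph_events]
  split_ifs with hm <;> simp only [mem_image, Prod.mk.injEq, notMem_empty] <;> grind

theorem count_map_snd_nbrs_oscGraph {d : ℕ} (h₁ : ∀ u : ZMod N, #(cslNbrs s₁ u) = d)
    (h₂ : ∀ u : ZMod N, #(cslNbrs s₂ u) = d) (u : ZMod N) (m : ℕ) :
    ((nbrs (oscGraph N s₁ s₂ n) n u).map Prod.snd).count m =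
      if 1 ≤ m ∧ m ≤ n then d else 0 := by
  rw [TemporalGraph.count_map_snd_nbrs, eventsAt_oscGraph]
  by_cases hm : 1 ≤ m ∧ m ≤ n
  · rw [if_pos hm.2, if_pos hm, if_pos hm,
      card_image_of_injective _ fun v w h => by simpa using h]
    split_ifs
    exacts [h₁ u, h₂ u]
  · simp [hm]

theorem map_snd_nbrs_oscGraph_eq (s₁' s₂' : ℕ) {d : ℕ}
    (h₁ : ∀ u : ZMod N, #(cslNbrs s₁ u) = d) (h₂ : ∀ u : ZMod N, #(cslNbrs s₂ u) = d)
    (h₁' : ∀ u : ZMod N, #(cslNbrs s₁' u) = d) (h₂' : ∀ u : ZMod N, #(cslNbrs s₂' u) = d)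
    (u u' : ZMod N) :
    (nbrs (oscGraph N s₁ s₂ n) n u).map Prod.snd =
      (nbrs (oscGraph N s₁' s₂' n) n u').map Prod.snd := by
  ext m
  rw [count_map_snd_nbrs_oscGraph s₁ s₂ n h₁ h₂, count_map_snd_nbrs_oscGraph s₁' s₂' n h₁' h₂']

theorem count_timedIndicators_oscGraph_true {m : ℕ} (h1 : 1 ≤ m) (h2 : m < n) (u : ZMod N)
    (S : Finset (ZMod N)) :
    ((oscGraph N s₁ s₂ n).timedIndicators n u S).count (m, true) =
      #((cslNbrs (if m % 2 = 1 then s₁ else s₂) u).filter (· ∈ S)) := by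
  rw [TemporalGraph.count_timedIndicators_true _ h2, eventsAt_oscGraph, if_pos ⟨h1, h2.le⟩,
    filter_image]
  exact card_image_of_injective _ fun v w h => by simpa using h

end OscillatingCSL

theorem card_cslNbrs_seven_two : ∀ u : ZMod 7, #(cslNbrs 2 u) = 4 := by decide

theorem card_cslNbrs_seven_three : ∀ u : ZMod 7, #(cslNbrs 3 u) = 4 := by decide

/- Node 2 of `oscGraph 7 2 3 n` meets both specialty nodes 1 and 7 (`0 : ZMod 7`) at time 1
and one of them at time 2. In `oscGraph 7 3 2 n` only node 4 meets both at time 1, and it meets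
neither at time 2. -/
theorem timedIndicators_oscGraph_seven_ne {n : ℕ} (hn : 3 ≤ n) (u : ZMod 7) :
    (oscGraph 7 2 3 n).timedIndicators n 2 {1, 0} ≠
      (oscGraph 7 3 2 n).timedIndicators n u {1, 0} := by
  intro h
  have h₁ := congrArg (Multiset.count (1, true)) h
  have h₂ := congrArg (Multiset.count (2, true)) h
  rw [count_timedIndicators_oscGraph_true _ _ _ le_rfl (by omega),
    count_timedIndicators_oscGraph_true _ _ _ le_rfl (by omega)] at h₁
  rw [count_timedIndicators_oscGraph_true _ _ _ (by omega) (by omega),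
    count_timedIndicators_oscGraph_true _ _ _ (by omega) (by omega)] at h₂
  clear h
  revert u
  decide

theorem stmt12_general (n : ℕ) (hn : 3 ≤ n) :
    (∀ k : ℕ, 1 ≤ k → ∀ u : ZMod 7,
      hrev (oscGraph 7 2 3 n) n k 2 {1, 0} ≠ hrev (oscGraph 7 3 2 n) n k u {1, 0}) ∧
    (∀ (k : ℕ) (u u' : ZMod 7),
      wlColor (oscGraph 7 2 3 n) n k u = wlColor (oscGraph 7 3 2 n) n k u') := by
  refine ⟨fun k hk u h => ?_, ?_⟩
  · obtain ⟨j, rfl⟩ := Nat.exists_eq_add_of_le' hk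
    apply timedIndicators_oscGraph_seven_ne hn u
    rw [← TemporalGraph.map_snd_hrev_succ, h, TemporalGraph.map_snd_hrev_succ]
  · exact TemporalGraph.wlColor_eq_of_map_snd_nbrs_eq _ _ n <|
      map_snd_nbrs_oscGraph_eq 2 3 n 3 2 card_cslNbrs_seven_two card_cslNbrs_seven_three
        card_cslNbrs_seven_three card_cslNbrs_seven_two

/-- In the Oscillating CSL graphs `G₁ = (C_{7,2} → C_{7,3} → …)` and
`G₂ = (C_{7,3} → C_{7,2} → …)` at an odd timestamp `n ≥ 3`, the heterogeneous revision
`r^k_2(t_n, {1,7})` in `G₁` (nodes 1..7 are represented by `ZMod 7`, node 7 by `0`)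
differs from `r^k_u(t_n, {1,7})` for every node `u` of `G₂` and every `k ≥ 1` (so a
3-layer RTRGN with injective functions distinguishes the two graphs), while Temporal
1-WL assigns identical colors throughout, hence cannot distinguish them. -/
theorem stmt12 (n : ℕ) (hn : 3 ≤ n) (hodd : n % 2 = 1) :
    (∀ k : ℕ, 1 ≤ k → ∀ u : ZMod 7,
      hrev (oscGraph 7 2 3 n) n k 2 {1, 0} ≠ hrev (oscGraph 7 3 2 n) n k u {1, 0}) ∧
    (∀ (k : ℕ) (u u' : ZMod 7),
      wlColor (oscGraph 7 2 3 n) n k u = wlColor (oscGraph 7 3 2 n) n k u') :=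
  stmt12_general n hn
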